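/- arXiv:2311.11352 — 3 statements merged into one kernel-verified Lean document; each statement's English description precedes it below -/
import Mathlib

section
/- For every real number x, the series ∑_{n=0}^∞ (B_n / n!) x^n converges and equals exp(e^x − 1), where B_n := e^{-1} ∑_{k=0}^∞ k^n / k! (the n-th Bell number given by Dobinski's formula). -/
/-!
Expanding both exponentials, `exp (e^x) = ∑_k e^{kx} / k! = ∑_k ∑_n (k x)^n / (n! k!)`.
The double series converges absolutely (its absolute values form the same series at `|x|`),
so it may be summed over `k` first instead; by Dobinski's formula the `n`-th column is
`e B_n x^n / n!`. Dividing by `e` gives the theorem.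
-/

open Real

/-- The `n`-th Bell number given by Dobinski's formula:
`B_n = e⁻¹ ∑_{k=0}^∞ k^n / k!` (with `0^0 = 1`). -/
noncomputable def bellDobinski (n : ℕ) : ℝ :=
  (Real.exp 1)⁻¹ * ∑' k : ℕ, (k : ℝ) ^ n / (Nat.factorial k : ℝ)

open Nat

theorem Summable.hasSum_of_hasSum_rows {α β γ : Type*} [AddCommMonoid γ] [TopologicalSpace γ]
    [ContinuousAdd γ] [T3Space γ] {f : α × β → γ} {g : α → γ} {s : γ} (hf : Summable f)
    (hrow : ∀ a, HasSum (fun b ↦ f (a, b)) (g a)) (hg : HasSum g s) : HasSum f s := by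
  rw [hg.unique (hf.hasSum.prod_fiberwise hrow)]
  exact hf.hasSum

theorem hasSum_prod_of_nonneg_of_hasSum_rows {α β : Type*} {f : α × β → ℝ} {g : α → ℝ} {s : ℝ}
    (hf : 0 ≤ f) (hrow : ∀ a, HasSum (fun b ↦ f (a, b)) (g a)) (hg : HasSum g s) :
    HasSum f s := by
  have hsum : Summable f := by
    refine (summable_prod_of_nonneg hf).2 ⟨fun a ↦ (hrow a).summable, ?_⟩
    simpa only [(hrow _).tsum_eq] using hg.summable
  exact hsum.hasSum_of_hasSum_rows hrow hg

theorem Real.hasSum_pow_div_factorial (y : ℝ) : HasSum (fun n ↦ y ^ n / n !) (exp y) := by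
  rw [exp_eq_exp_ℝ]
  exact NormedSpace.expSeries_div_hasSum_exp y

theorem Real.hasSum_exp_nat_mul_div_factorial (x : ℝ) :
    HasSum (fun k : ℕ ↦ exp (k * x) / k !) (exp (exp x)) := by
  simpa only [exp_nat_mul] using hasSum_pow_div_factorial (exp x)

theorem summable_natCast_pow_div_factorial (n : ℕ) :
    Summable (fun k : ℕ ↦ (k : ℝ) ^ n / k !) := by
  refine .of_nonneg_of_le (fun k ↦ by positivity) (fun k ↦ ?_)
    ((summable_pow_div_factorial (exp 1)).mul_left (n ! : ℝ))
  have hk : (k : ℝ) ^ n ≤ n ! * exp 1 ^ k := by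
    rw [← exp_nat_mul, mul_one, mul_comm, ← div_le_iff₀ (by positivity)]
    exact pow_div_factorial_le_exp _ k.cast_nonneg n
  calc (k : ℝ) ^ n / k ! ≤ n ! * exp 1 ^ k / k ! := by gcongr
    _ = n ! * (exp 1 ^ k / k !) := mul_div_assoc _ _ _

theorem hasSum_natCast_pow_div_factorial_bellDobinski (n : ℕ) :
    HasSum (fun k : ℕ ↦ (k : ℝ) ^ n / k !) (exp 1 * bellDobinski n) := by
  rw [bellDobinski, mul_inv_cancel_left₀ (exp_ne_zero 1)]
  exact (summable_natCast_pow_div_factorial n).hasSum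

noncomputable def expExpTerm (x : ℝ) (p : ℕ × ℕ) : ℝ :=
  (p.1 * x) ^ p.2 / p.2 ! / p.1 !

theorem expExpTerm_nonneg {x : ℝ} (hx : 0 ≤ x) (p : ℕ × ℕ) : 0 ≤ expExpTerm x p := by
  unfold expExpTerm
  positivity

theorem abs_expExpTerm (x : ℝ) (p : ℕ × ℕ) : |expExpTerm x p| = expExpTerm |x| p := by
  simp [expExpTerm, abs_div, abs_mul, abs_pow]

theorem hasSum_expExpTerm_row (x : ℝ) (k : ℕ) :
    HasSum (fun n ↦ expExpTerm x (k, n)) (exp (k * x) / k !) :=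
  (hasSum_pow_div_factorial (k * x)).div_const (k ! : ℝ)

theorem hasSum_expExpTerm_column (x : ℝ) (n : ℕ) :
    HasSum (fun k ↦ expExpTerm x (k, n)) (exp 1 * bellDobinski n * (x ^ n / n !)) := by
  refine ((hasSum_natCast_pow_div_factorial_bellDobinski n).mul_right (x ^ n / n !)).congr_fun
    fun k ↦ ?_
  simp only [expExpTerm, mul_pow]
  ring

theorem hasSum_expExpTerm (x : ℝ) : HasSum (expExpTerm x) (exp (exp x)) := by
  have habs : Summable (fun p ↦ |expExpTerm x p|) := by
    simp_rw [abs_expExpTerm]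
    exact (hasSum_prod_of_nonneg_of_hasSum_rows (expExpTerm_nonneg (abs_nonneg x))
      (hasSum_expExpTerm_row |x|) (hasSum_exp_nat_mul_div_factorial |x|)).summable
  exact habs.of_abs.hasSum_of_hasSum_rows (hasSum_expExpTerm_row x)
    (hasSum_exp_nat_mul_div_factorial x)

/-- For every real `x`, the series `∑_{n=0}^∞ (B_n / n!) x^n` converges and equals
`exp (e^x - 1)`. -/
theorem bell_generating_function (x : ℝ) :
    HasSum (fun n : ℕ => bellDobinski n / (Nat.factorial n : ℝ) * x ^ n)
      (Real.exp (Real.exp x - 1)) := by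
  have hswap : HasSum (fun p : ℕ × ℕ ↦ expExpTerm x p.swap) (exp (exp x)) :=
    (Equiv.prodComm ℕ ℕ).hasSum_iff.mpr (hasSum_expExpTerm x)
  have hcolumns := (hswap.prod_fiberwise (hasSum_expExpTerm_column x)).div_const (exp 1)
  rw [← exp_sub] at hcolumns
  refine hcolumns.congr_fun fun n ↦ ?_
  field_simp
end

section
/- Dobinski's formula: for every natural number n, the quantity e^{-1} ∑_{k=0}^∞ k^n / k! equals the number of partitions of a set with n elements (equivalently, the n-th moment of a Poisson distribution with parameter 1 equals the n-th Bell number counting set partitions). -/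
/-! Both sides satisfy the recurrence `B (n + 1) = ∑ i ≤ n, (n choose i) * B (n - i)`, `B 0 = 1`,
that defines `Nat.bell`. For the series, shift the index and expand `(k + 1) ^ n` binomially.
For equivalence relations on `Option α`, record the class `s ⊆ α` of `none` together with the
restriction of the relation to the complement of `s`. -/

open Finset Real
open scoped Nat

namespace Setoid

variable {α : Type*}

instance finite [Finite α] : Finite (Setoid α) :=
  Finite.of_injective (fun r : Setoid α => ⇑r) fun _ _ => eq_iff_rel_eq.mpr

def congr {β : Type*} (e : α ≃ β) : Setoid α ≃ Setoid β where
  toFun r := r.comap e.symm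
  invFun r := r.comap e
  left_inv r := by ext; simp [comap_rel]
  right_inv r := by ext; simp [comap_rel]

section Option

variable [Fintype α]

open Classical in
noncomputable def noneClass (t : Setoid (Option α)) : Finset α :=
  univ.filter fun a => t (some a) none

theorem mem_noneClass {t : Setoid (Option α)} {a : α} : a ∈ noneClass t ↔ t (some a) none := by
  simp [noneClass]

variable [DecidableEq α]

def extendCompl (s : Finset α) (u : Setoid {a // a ∉ s}) : Setoid (Option α) :=
  ker fun x => x.bind fun a => if h : a ∈ s then none else some (Quotient.mk u ⟨a, h⟩)

theorem noneClass_extendCompl (s : Finset α) (u : Setoid {a // a ∉ s}) :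
    noneClass (extendCompl s u) = s := by
  ext a
  by_cases h : a ∈ s <;> simp [mem_noneClass, extendCompl, ker_def, h]

theorem extendCompl_noneClass (t : Setoid (Option α)) :
    extendCompl (noneClass t) (t.comap (some ∘ Subtype.val)) = t := by
  ext x y
  rw [extendCompl, ker_def]
  rcases x with _ | a <;> rcases y with _ | b
  · simp
  · simp [mem_noneClass, t.comm' (x := none)]
  · simp [mem_noneClass]
  · by_cases ha : t (some a) none <;> by_cases hb : t (some b) none <;>
      simp only [Option.bind_some, mem_noneClass, ha, hb, dif_pos, dif_neg, not_false_eq_true,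
        reduceCtorEq, Option.some_inj, true_iff, false_iff]
    · exact t.trans ha (t.symm hb)
    · exact fun h => hb (t.trans (t.symm h) ha)
    · exact fun h => ha (t.trans h hb)
    · exact Quotient.eq

noncomputable def fiberNoneClassEquiv (s : Finset α) :
    {t : Setoid (Option α) // noneClass t = s} ≃ Setoid {a // a ∉ s} where
  toFun t := t.1.comap (some ∘ Subtype.val)
  invFun u := ⟨extendCompl s u, noneClass_extendCompl s u⟩
  left_inv := by
    rintro ⟨t, rfl⟩
    exact Subtype.ext (extendCompl_noneClass t)
  right_inv u := by
    ext a b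
    show extendCompl s u (some a.1) (some b.1) ↔ u a b
    unfold extendCompl
    rw [ker_def]
    simp [a.2, b.2, Quotient.eq]

theorem natCard_option_eq_sum :
    Nat.card (Setoid (Option α)) = ∑ s : Finset α, Nat.card (Setoid {a // a ∉ s}) := by
  rw [← Nat.card_congr (Equiv.sigmaFiberEquiv noneClass), Nat.card_sigma]
  exact sum_congr rfl fun s _ => Nat.card_congr (fiberNoneClassEquiv s)

end Option

theorem natCard_fin_eq_bell (n : ℕ) : Nat.card (Setoid (Fin n)) = n.bell := by
  induction n using Nat.strong_induction_on with
  | _ n ih =>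
  cases n with
  | zero =>
    exact Nat.bell_zero ▸ Nat.card_eq_one_iff_unique.mpr ⟨⟨fun _ _ => ext fun x => x.elim0⟩, ⟨⊥⟩⟩
  | succ m =>
    have hcompl (s : Finset (Fin m)) : Nat.card (Setoid {a // a ∉ s}) = (m - #s).bell := by
      rw [← ih _ (by omega)]
      exact Nat.card_congr (congr (Fintype.equivFinOfCardEq (by simp)))
    rw [Nat.card_congr (congr (finSuccEquiv m)), natCard_option_eq_sum, Nat.bell_succ]
    simp only [hcompl]
    rw [← powerset_univ, sum_powerset_apply_card fun j => (m - j).bell, card_univ,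
      Fintype.card_fin, Nat.range_succ_eq_Iic]
    simp only [smul_eq_mul]

theorem natCard_eq_bell (α : Type*) [Finite α] : Nat.card (Setoid α) = (Nat.card α).bell := by
  rw [Nat.card_congr (congr (Finite.equivFin α)), natCard_fin_eq_bell]

end Setoid

theorem hasSum_natCast_pow_div_factorial (n : ℕ) :
    HasSum (fun k : ℕ => (k : ℝ) ^ n / k !) (exp 1 * n.bell) := by
  induction n using Nat.strong_induction_on with
  | _ n ih =>
  cases n with
  | zero => simpa [exp_eq_exp_ℝ] using NormedSpace.expSeries_div_hasSum_exp (1 : ℝ)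
  | succ n =>
    have shift (k : ℕ) : ((k : ℝ) + 1) ^ (n + 1) / (k + 1)!
        = ∑ i ∈ Iic n, (n.choose i : ℝ) * ((k : ℝ) ^ (n - i) / k !) := by
      rw [Nat.factorial_succ, ← Nat.range_succ_eq_Iic]
      push_cast
      rw [pow_succ', mul_div_mul_left _ _ (by positivity), add_comm, add_pow, sum_div]
      exact sum_congr rfl fun i _ => by ring
    rw [← hasSum_nat_add_iff' 1]
    have hsum := hasSum_sum fun i (_ : i ∈ Iic n) =>
      (ih (n - i) (by omega)).mul_left (n.choose i : ℝ)
    simpa [shift, Nat.bell_succ, mul_sum, mul_left_comm] using hsum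

/-- Dobinski's formula: for every natural number `n`, the `n`-th moment of a Poisson
distribution with parameter 1, `e⁻¹ ∑_{k=0}^∞ k^n / k!` (with `0^0 = 1`), equals the number
of partitions of an `n`-element set, i.e. the number of equivalence relations on `Fin n`. -/
theorem dobinski_formula (n : ℕ) :
    (Real.exp 1)⁻¹ * ∑' k : ℕ, (k : ℝ) ^ n / (Nat.factorial k : ℝ)
      = (Nat.card (Setoid (Fin n)) : ℝ) := by
  rw [(hasSum_natCast_pow_div_factorial n).tsum_eq, Setoid.natCard_eq_bell, Nat.card_fin,
    inv_mul_cancel_left₀ (exp_pos 1).ne']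
end

section
/- (Theorem 1(4): autocovariance recursion.) Let (Ω, F, P) be a probability space with a filtration (F_t)_{t ∈ ℤ}, let (X_t)_{t ∈ ℤ} be square-integrable random variables adapted to (F_t), and set Z_t := E[X_t | F_{t-1}], assumed square-integrable. Suppose there are constants α₀ > 0, α_i ≥ 0 (1 ≤ i ≤ p), β_j ≥ 0 (1 ≤ j ≤ q) with Z_t = α₀ + ∑_{i=1}^p α_i X_{t-i} + ∑_{j=1}^q β_j Z_{t-j} almost surely for every t, and suppose the process is second-order stationary in the sense that there exist functions γ_X, γ_Z : ℕ → ℝ with Cov(X_t, X_{t-k}) = γ_X(k) and Cov(Z_t, Z_{t-k}) = γ_Z(k) for all t ∈ ℤ and k ≥ 0. Then for every t and every integer k ≥ 1, Cov(Z_t, X_{t-k}) = ∑_{i=1}^p α_i γ_X(|k − i|) + ∑_{j=1}^{min(k-1, q)} β_j γ_X(k − j) + ∑_{j=min(k-1,q)+1}^{q} β_j γ_Z(j − k). -/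
/-!
Take covariances with `X (t - k)` on both sides of the recursion: by bilinearity,
`Cov(Z_t, X_{t-k})` becomes a combination of `Cov(X_{t-i}, X_{t-k})` and `Cov(Z_{t-j}, X_{t-k})`.
Since `Z_s = E[X_s | F_{s-1}]`, replacing `Z_s` by `X_s` does not change its covariance with any
square-integrable `F_{s-1}`-measurable variable. For `j < k` this turns `Cov(Z_{t-j}, X_{t-k})`
into `γ_X(k - j)`; for `j ≥ k` it turns `Cov(X_{t-k}, Z_{t-j})` into `γ_Z(j - k)`.
-/

open MeasureTheory Finset

noncomputable def cov {Ω : Type*} [MeasurableSpace Ω] (P : Measure Ω) (f g : Ω → ℝ) : ℝ :=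
  (∫ ω, f ω * g ω ∂P) - (∫ ω, f ω ∂P) * (∫ ω, g ω ∂P)

open ProbabilityTheory

section Covariance

variable {Ω : Type*} {mΩ : MeasurableSpace Ω} {P : Measure Ω}

lemma cov_eq_covariance [IsProbabilityMeasure P] {f g : Ω → ℝ} (hf : MemLp f 2 P)
    (hg : MemLp g 2 P) : cov P f g = covariance f g P :=
  (covariance_eq_sub hf hg).symm

lemma covariance_congr_ae_left {f f' g : Ω → ℝ} (h : f =ᵐ[P] f') :
    covariance f g P = covariance f' g P := by
  unfold covariance
  rw [integral_congr_ae h]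
  exact integral_congr_ae (h.mono fun ω hω => by simp only [hω])

lemma covariance_fun_sum_const_mul_left [IsFiniteMeasure P] {ι : Type*} {s : Finset ι}
    {U : ι → Ω → ℝ} {W : Ω → ℝ} (a : ι → ℝ) (hU : ∀ i ∈ s, MemLp (U i) 2 P)
    (hW : MemLp W 2 P) :
    covariance (fun ω => ∑ i ∈ s, a i * U i ω) W P = ∑ i ∈ s, a i * covariance (U i) W P := by
  rw [covariance_fun_sum_left' (fun i hi => (hU i hi).const_mul (a i)) hW]
  simp only [covariance_const_mul_left]

lemma covariance_const_add_sum_add_sum_left [IsProbabilityMeasure P] {ι κ : Type*}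
    {s : Finset ι} {s' : Finset κ} {U : ι → Ω → ℝ} {V : κ → Ω → ℝ} {W : Ω → ℝ}
    (c : ℝ) (a : ι → ℝ) (b : κ → ℝ) (hU : ∀ i ∈ s, MemLp (U i) 2 P)
    (hV : ∀ j ∈ s', MemLp (V j) 2 P) (hW : MemLp W 2 P) :
    covariance (fun ω => c + ∑ i ∈ s, a i * U i ω + ∑ j ∈ s', b j * V j ω) W P
      = ∑ i ∈ s, a i * covariance (U i) W P + ∑ j ∈ s', b j * covariance (V j) W P := by
  set A := fun ω => ∑ i ∈ s, a i * U i ω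
  set B := fun ω => ∑ j ∈ s', b j * V j ω
  have hA : MemLp A 2 P := memLp_finsetSum s fun i hi => (hU i hi).const_mul (a i)
  have hB : MemLp B 2 P := memLp_finsetSum s' fun j hj => (hV j hj).const_mul (b j)
  calc covariance (fun ω => c + A ω + B ω) W P
      = covariance (fun ω => c + (A + B) ω) W P := by simp only [Pi.add_apply, add_assoc]
    _ = covariance A W P + covariance B W P := by
      rw [covariance_const_add_left ((hA.add hB).integrable one_le_two),
        covariance_add_left hA hB hW]
    _ = _ := by
      rw [covariance_fun_sum_const_mul_left a hU hW, covariance_fun_sum_const_mul_left b hV hW]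

lemma covariance_condExp_left [IsProbabilityMeasure P] {m : MeasurableSpace Ω} (hm : m ≤ mΩ)
    {f g : Ω → ℝ} (hf : MemLp f 2 P) (hg : MemLp g 2 P) (hgm : StronglyMeasurable[m] g) :
    covariance (P[f|m]) g P = covariance f g P := by
  have hfg : Integrable (f * g) P := hf.integrable_mul hg
  have hf1 : Integrable f P := hf.integrable one_le_two
  have h_pull : P[P[f|m] * g] = P[f * g] := by
    rw [← integral_congr_ae (condExp_mul_of_stronglyMeasurable_right hgm hfg hf1),
      integral_condExp hm]
  rw [covariance_eq_sub (hf.condExp one_le_two) hg, covariance_eq_sub hf hg, h_pull,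
    integral_condExp hm]

end Covariance

section ConditionalMean

variable {Ω : Type*} {mΩ : MeasurableSpace Ω} {P : Measure Ω} {F : Filtration ℤ mΩ}
  {X Z : ℤ → Ω → ℝ}

lemma memLp_condMean (hX : ∀ t, MemLp (X t) 2 P) (hZ : ∀ t, Z t = P[X t | F (t - 1)]) (t : ℤ) :
    MemLp (Z t) 2 P :=
  hZ t ▸ (hX t).condExp one_le_two

lemma covariance_condMean_left_of_lt [IsProbabilityMeasure P] (hadapted : StronglyAdapted F X)
    (hX : ∀ t, MemLp (X t) 2 P) (hZ : ∀ t, Z t = P[X t | F (t - 1)]) {s u : ℤ} (hus : u < s) :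
    covariance (Z s) (X u) P = covariance (X s) (X u) P := by
  rw [hZ s]
  exact covariance_condExp_left (F.le _) (hX s) (hX u) ((hadapted u).mono (F.mono (by omega)))

lemma covariance_condMean_right_of_le [IsProbabilityMeasure P] (hX : ∀ t, MemLp (X t) 2 P)
    (hZ : ∀ t, Z t = P[X t | F (t - 1)]) {s u : ℤ} (hus : u ≤ s) :
    covariance (X s) (Z u) P = covariance (Z s) (Z u) P := by
  have hZu : StronglyMeasurable[F (s - 1)] (Z u) :=
    hZ u ▸ stronglyMeasurable_condExp.mono (F.mono (by omega))
  rw [hZ s, covariance_condExp_left (F.le _) (hX s) (memLp_condMean hX hZ u) hZu]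

end ConditionalMean

section Lags

variable {Ω : Type*} {mΩ : MeasurableSpace Ω} {P : Measure Ω} {Y W : ℤ → Ω → ℝ} {γ : ℕ → ℝ}

lemma covariance_sub_sub_of_le (h : ∀ t : ℤ, ∀ k : ℕ, covariance (Y t) (W (t - k)) P = γ k)
    (t : ℤ) {i k : ℕ} (hik : i ≤ k) : covariance (Y (t - i)) (W (t - k)) P = γ (k - i) := by
  rw [← h (t - i) (k - i)]
  congr 2
  omega

lemma covariance_sub_sub_eq_natAbs (h : ∀ t : ℤ, ∀ k : ℕ, covariance (Y t) (Y (t - k)) P = γ k)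
    (t : ℤ) (i k : ℕ) : covariance (Y (t - i)) (Y (t - k)) P = γ ((k : ℤ) - i).natAbs := by
  rcases le_total i k with hik | hki
  · rw [covariance_sub_sub_of_le h t hik]
    congr 1
    omega
  · rw [covariance_comm, covariance_sub_sub_of_le h t hki]
    congr 1
    omega

end Lags

lemma sum_Icc_one_add_sum_Icc_succ {M : Type*} [AddCommMonoid M] (f : ℕ → M) {m n : ℕ}
    (hmn : m ≤ n) : ∑ j ∈ Icc 1 m, f j + ∑ j ∈ Icc (m + 1) n, f j = ∑ j ∈ Icc 1 n, f j := by
  have hIcc_one : ∀ a, Icc 1 a = Ioc 0 a := Icc_add_one_left_eq_Ioc 0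
  rw [hIcc_one, hIcc_one, Icc_add_one_left_eq_Ioc]
  exact sum_Ioc_consecutive f (Nat.zero_le m) hmn

theorem ingarch_autocovariance_recursion_general
    {Ω : Type*} {mΩ : MeasurableSpace Ω} {P : Measure Ω} [IsProbabilityMeasure P]
    (F : Filtration ℤ mΩ) (X : ℤ → Ω → ℝ)
    (hadapted : StronglyAdapted F X)
    (hX : ∀ t, MemLp (X t) 2 P)
    (Z : ℤ → Ω → ℝ) (hZdef : ∀ t, Z t = P[X t | F (t - 1)])
    (p q : ℕ) (α₀ : ℝ) (α β : ℕ → ℝ)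
    (hrec : ∀ t : ℤ, ∀ᵐ ω ∂P,
      Z t ω = α₀ + ∑ i ∈ Icc 1 p, α i * X (t - (i : ℤ)) ω
        + ∑ j ∈ Icc 1 q, β j * Z (t - (j : ℤ)) ω)
    (γX γZ : ℕ → ℝ)
    (hγX : ∀ t : ℤ, ∀ k : ℕ, cov P (X t) (X (t - (k : ℤ))) = γX k)
    (hγZ : ∀ t : ℤ, ∀ k : ℕ, cov P (Z t) (Z (t - (k : ℤ))) = γZ k) :
    ∀ t : ℤ, ∀ k : ℕ, 1 ≤ k →
      cov P (Z t) (X (t - (k : ℤ)))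
        = ∑ i ∈ Icc 1 p, α i * γX ((k : ℤ) - (i : ℤ)).natAbs
          + ∑ j ∈ Icc 1 (min (k - 1) q), β j * γX (k - j)
          + ∑ j ∈ Icc (min (k - 1) q + 1) q, β j * γZ (j - k) := by
  have hZ := memLp_condMean hX hZdef
  have hγX' : ∀ t : ℤ, ∀ k : ℕ, covariance (X t) (X (t - k)) P = γX k := fun t k => by
    rw [← cov_eq_covariance (hX _) (hX _), hγX]
  have hγZ' : ∀ t : ℤ, ∀ k : ℕ, covariance (Z t) (Z (t - k)) P = γZ k := fun t k => by
    rw [← cov_eq_covariance (hZ _) (hZ _), hγZ]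
  intro t k hk
  rw [cov_eq_covariance (hZ t) (hX _), covariance_congr_ae_left (hrec t),
    covariance_const_add_sum_add_sum_left α₀ α β (fun _ _ => hX _) (fun _ _ => hZ _) (hX _),
    ← sum_Icc_one_add_sum_Icc_succ _ (min_le_right (k - 1) q), add_assoc]
  congr 1
  · exact sum_congr rfl fun i _ => by rw [covariance_sub_sub_eq_natAbs hγX']
  congr 1
  · refine sum_congr rfl fun j hj => ?_
    rw [mem_Icc] at hj
    rw [covariance_condMean_left_of_lt hadapted hX hZdef (by omega),
      covariance_sub_sub_of_le hγX' t (by omega)]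
  · refine sum_congr rfl fun j hj => ?_
    rw [mem_Icc] at hj
    rw [covariance_comm, covariance_condMean_right_of_le hX hZdef (by omega),
      covariance_sub_sub_of_le hγZ' t (by omega)]

/-- (Theorem 1(4): autocovariance recursion for a second-order stationary INGARCH(p,q)
process.) If `Z_t := E[X_t | F_{t-1}]` satisfies the linear recursion
`Z_t = α₀ + ∑_{i=1}^p α_i X_{t-i} + ∑_{j=1}^q β_j Z_{t-j}` a.s. and the process is
second-order stationary with autocovariance functions `γ_X` and `γ_Z`, then for `k ≥ 1`,
`Cov(Z_t, X_{t-k}) = ∑_{i=1}^p α_i γ_X(|k-i|) + ∑_{j=1}^{min(k-1,q)} β_j γ_X(k-j)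
  + ∑_{j=min(k-1,q)+1}^{q} β_j γ_Z(j-k)`. -/
theorem ingarch_autocovariance_recursion
    {Ω : Type*} {mΩ : MeasurableSpace Ω} {P : Measure Ω} [IsProbabilityMeasure P]
    (F : Filtration ℤ mΩ) (X : ℤ → Ω → ℝ)
    (hadapted : StronglyAdapted F X)
    (hX : ∀ t, MemLp (X t) 2 P)
    (Z : ℤ → Ω → ℝ) (hZdef : ∀ t, Z t = P[X t | F (t - 1)])
    (hZ : ∀ t, MemLp (Z t) 2 P)
    (p q : ℕ) (α₀ : ℝ) (α β : ℕ → ℝ)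
    (hα₀ : 0 < α₀)
    (hα : ∀ i ∈ Icc 1 p, 0 ≤ α i)
    (hβ : ∀ j ∈ Icc 1 q, 0 ≤ β j)
    (hrec : ∀ t : ℤ, ∀ᵐ ω ∂P,
      Z t ω = α₀ + ∑ i ∈ Icc 1 p, α i * X (t - (i : ℤ)) ω
        + ∑ j ∈ Icc 1 q, β j * Z (t - (j : ℤ)) ω)
    (γX γZ : ℕ → ℝ)
    (hγX : ∀ t : ℤ, ∀ k : ℕ, cov P (X t) (X (t - (k : ℤ))) = γX k)
    (hγZ : ∀ t : ℤ, ∀ k : ℕ, cov P (Z t) (Z (t - (k : ℤ))) = γZ k) :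
    ∀ t : ℤ, ∀ k : ℕ, 1 ≤ k →
      cov P (Z t) (X (t - (k : ℤ)))
        = ∑ i ∈ Icc 1 p, α i * γX ((k : ℤ) - (i : ℤ)).natAbs
          + ∑ j ∈ Icc 1 (min (k - 1) q), β j * γX (k - j)
          + ∑ j ∈ Icc (min (k - 1) q + 1) q, β j * γZ (j - k) :=
  ingarch_autocovariance_recursion_general F X hadapted hX Z hZdef p q α₀ α β hrec γX γZ hγX hγZ
end
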